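/- arXiv:1108.0692 — 3 statements merged into one kernel-verified Lean document; each statement's English description precedes it below -/
import Mathlib

section
/- Let G be a group and A an abelian normal subgroup of G. Let t, u ∈ G with tu = ut, and let a, b ∈ A. Then for every c ≥ 1, the Malcev law M_c(x,y) holds for the substitution x = ta, y = ub (i.e. α_c(ta,ub) = β_c(ta,ub)) if and only if a^{f_c(u,t)} = b^{f_c(t,u)}, where f_c is evaluated at the conjugation automorphisms induced by t and u on A. -/
open scoped IsMulCommutative

/-- Malcev word pair `(α_c, β_c)`. -/
def malcevPair {G : Type*} [Monoid G] (c : ℕ) (x y : G) : G × G :=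
  Nat.rec (x, y) (fun _ p => (p.1 * p.2, p.2 * p.1)) c

/-- The Malcev word `α_c(x,y)`. -/
def malcevAlpha {G : Type*} [Monoid G] (c : ℕ) (x y : G) : G := (malcevPair c x y).1

/-- The Malcev word `β_c(x,y)`. -/
def malcevBeta {G : Type*} [Monoid G] (c : ℕ) (x y : G) : G := (malcevPair c x y).2

/-- The evaluation of `f_c(X,Y) = (X-1)·∏_{i=0}^{c-2}(X^{2^i}Y^{2^i}-1)` at two
elements of a (possibly noncommutative) ring. -/
def fEval {R : Type*} [Ring R] (c : ℕ) (t u : R) : R :=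
  (t - 1) * ((List.range (c - 1)).map fun i => t ^ 2 ^ i * u ^ 2 ^ i - 1).prod

/-- The endomorphism of the abelian normal subgroup `A` (written additively)
induced by conjugation by `t`, i.e. `a ↦ a^t = t⁻¹ * a * t`. -/
def conjEnd {G : Type*} [Group G] (A : Subgroup G) [hN : A.Normal] [IsMulCommutative A]
    (t : G) : AddMonoid.End (Additive A) :=
  AddMonoidHom.mk'
    (fun a => Additive.ofMul (⟨t⁻¹ * ((Additive.toMul a : A) : G) * t, by
      simpa using hN.conj_mem _ (Additive.toMul a).2 t⁻¹⟩ : A))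
    (fun a b => congrArg Additive.ofMul (Subtype.ext (by
      show t⁻¹ * ((Additive.toMul a * Additive.toMul b : A) : G) * t = _
      simp only [toMul_ofMul, Subgroup.coe_mul]
      group)))

/-!
With `s = (tu)^(2^(c-1))`, both `α_c(ta, ub)` and `β_c(ta, ub)` lie in the coset `sA`, say
`α_c = s p` and `β_c = s q`, so the law holds iff `p = q`. Since `g a · h b = gh · a^h b` for
`a, b ∈ A`, passing from `c` to `c + 1` squares `s` and multiplies `p - q` (written additively)
by `s - 1`, where `s` acts by conjugation; for `c = 1` one finds
`p - q = a^(u-1) - b^(t-1)`. Hence `p - q = a^(f_c(u,t)) - b^(f_c(t,u))`.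
-/

lemma Commute.sub_one_sub_one {R : Type*} [Ring R] {x y : R} (h : Commute x y) :
    Commute (x - 1) (y - 1) :=
  (h.sub_right (Commute.one_right x)).sub_left (Commute.one_left _)

lemma fEval_one {R : Type*} [Ring R] (X Y : R) : fEval 1 X Y = X - 1 := by
  simp [fEval]

lemma fEval_add_two {R : Type*} [Ring R] {X Y : R} (h : Commute X Y) (n : ℕ) :
    fEval (n + 2) X Y = ((X * Y) ^ 2 ^ n - 1) * fEval (n + 1) X Y := by
  have hfactor : (fun i : ℕ => X ^ 2 ^ i * Y ^ 2 ^ i - 1) = fun i => (X * Y) ^ 2 ^ i - 1 := by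
    simp only [h.mul_pow]
  set F := (X * Y) ^ 2 ^ n - 1
  set P := ((List.range n).map fun i => (X * Y) ^ 2 ^ i - 1).prod
  have hFX : Commute F (X - 1) :=
    (((Commute.refl X).mul_left h.symm).pow_left _).sub_one_sub_one
  have hFP : Commute F P := by
    refine Commute.list_prod_right _ _ fun z hz => ?_
    obtain ⟨i, -, rfl⟩ := List.mem_map.mp hz
    exact ((Commute.refl (X * Y)).pow_pow _ _).sub_one_sub_one
  calc fEval (n + 2) X Y = (X - 1) * (P * F) := by
        rw [fEval, show n + 2 - 1 = n + 1 from rfl, hfactor, List.prod_range_succ]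
    _ = F * ((X - 1) * P) := by rw [← hFP.eq, ← mul_assoc, ← hFX.eq, mul_assoc]
    _ = F * fEval (n + 1) X Y := by rw [fEval, Nat.add_sub_cancel, hfactor]

lemma AddMonoid.End.mul_apply {M : Type*} [AddCommMonoid M] (f g : AddMonoid.End M) (m : M) :
    (f * g) m = f (g m) := rfl

lemma AddMonoid.End.sub_apply {M : Type*} [AddCommGroup M] (f g : AddMonoid.End M) (m : M) :
    (f - g) m = f m - g m := rfl

lemma malcevAlpha_succ {M : Type*} [Monoid M] (n : ℕ) (x y : M) :
    malcevAlpha (n + 1) x y = malcevAlpha n x y * malcevBeta n x y := rfl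

lemma malcevBeta_succ {M : Type*} [Monoid M] (n : ℕ) (x y : M) :
    malcevBeta (n + 1) x y = malcevBeta n x y * malcevAlpha n x y := rfl

section ConjEnd

variable {G : Type*} [Group G] (A : Subgroup G) [A.Normal] [IsMulCommutative A]

lemma conjEnd_apply (g : G) (a : Additive A) :
    ((Additive.toMul (conjEnd A g a) : A) : G) = g⁻¹ * ((Additive.toMul a : A) : G) * g := rfl

lemma conjEnd_one : conjEnd A 1 = 1 := by
  ext a
  simp [conjEnd_apply]

lemma conjEnd_mul (g h : G) : conjEnd A (g * h) = conjEnd A h * conjEnd A g := by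
  ext a
  simp only [conjEnd_apply, AddMonoid.End.coe_mul, Function.comp_apply]
  group

lemma conjEnd_pow (g : G) (n : ℕ) : conjEnd A (g ^ n) = conjEnd A g ^ n := by
  induction n with
  | zero => rw [pow_zero, pow_zero, conjEnd_one]
  | succ n ih => rw [pow_succ, conjEnd_mul, ih, pow_succ']

lemma mul_coe_mul_mul_coe (g h : G) (a b : A) :
    g * a * (h * b) = g * h * ((Additive.toMul (conjEnd A h (.ofMul a) + .ofMul b) : A) : G) := by
  rw [toMul_add, Subgroup.coe_mul, conjEnd_apply]
  simp only [toMul_ofMul]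
  group

lemma exists_malcev_succ_eq_pow_mul {t u : G} (htu : Commute t u) (a b : A) (n : ℕ) :
    ∃ p q : A,
      malcevAlpha (n + 1) (t * (a : G)) (u * (b : G)) = (t * u) ^ 2 ^ n * (p : G) ∧
      malcevBeta (n + 1) (t * (a : G)) (u * (b : G)) = (t * u) ^ 2 ^ n * (q : G) ∧
      Additive.ofMul p - Additive.ofMul q =
        fEval (n + 1) (conjEnd A u) (conjEnd A t) (.ofMul a) -
          fEval (n + 1) (conjEnd A t) (conjEnd A u) (.ofMul b) := by
  have hTU : Commute (conjEnd A t) (conjEnd A u) := by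
    rw [Commute, SemiconjBy, ← conjEnd_mul, ← conjEnd_mul, htu.eq]
  induction n with
  | zero =>
    refine ⟨Additive.toMul (conjEnd A u (.ofMul a) + .ofMul b),
      Additive.toMul (conjEnd A t (.ofMul b) + .ofMul a), ?_, ?_, ?_⟩
    · simp only [malcevAlpha_succ, pow_zero, pow_one]
      exact mul_coe_mul_mul_coe A t u a b
    · simp only [malcevBeta_succ, pow_zero, pow_one, htu.eq]
      exact mul_coe_mul_mul_coe A u t b a
    · simp only [zero_add, ofMul_toMul, fEval_one, AddMonoid.End.sub_apply,
        AddMonoid.End.one_apply]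
      abel
  | succ n ih =>
    obtain ⟨p, q, hα, hβ, hpq⟩ := ih
    set s := (t * u) ^ 2 ^ n
    have hss : (t * u) ^ 2 ^ (n + 1) = s * s := by rw [pow_succ, pow_mul, sq]
    have hS : conjEnd A s = (conjEnd A u * conjEnd A t) ^ 2 ^ n := by
      rw [conjEnd_pow, conjEnd_mul]
    refine ⟨Additive.toMul (conjEnd A s (.ofMul p) + .ofMul q),
      Additive.toMul (conjEnd A s (.ofMul q) + .ofMul p), ?_, ?_, ?_⟩
    · rw [malcevAlpha_succ, hα, hβ, hss, mul_coe_mul_mul_coe]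
    · rw [malcevBeta_succ, hα, hβ, hss, mul_coe_mul_mul_coe]
    · calc _ = (conjEnd A s - 1) (.ofMul p - .ofMul q) := by
            simp only [ofMul_toMul, AddMonoid.End.sub_apply, AddMonoid.End.one_apply, map_sub]
            abel
        _ = _ := by
          rw [hpq, map_sub, ← AddMonoid.End.mul_apply, ← AddMonoid.End.mul_apply,
            fEval_add_two hTU.symm, fEval_add_two hTU, hTU.eq, hS]

end ConjEnd

theorem malcev_law_substitution_iff
    {G : Type*} [Group G] (A : Subgroup G) [A.Normal] [IsMulCommutative A]
    (t u : G) (htu : t * u = u * t) (a b : A) (c : ℕ) (hc : 1 ≤ c) :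
    malcevAlpha c (t * (a : G)) (u * (b : G)) = malcevBeta c (t * (a : G)) (u * (b : G)) ↔
      Additive.toMul (fEval c (conjEnd A u) (conjEnd A t) (Additive.ofMul a)) =
        Additive.toMul (fEval c (conjEnd A t) (conjEnd A u) (Additive.ofMul b)) := by
  obtain ⟨n, rfl⟩ : ∃ n, c = n + 1 := ⟨c - 1, by omega⟩
  obtain ⟨p, q, hα, hβ, hpq⟩ := exists_malcev_succ_eq_pow_mul A htu a b n
  rw [hα, hβ, mul_right_inj, SetLike.coe_eq_coe, ← Additive.ofMul.injective.eq_iff,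
    ← sub_eq_zero, hpq, sub_eq_zero, Additive.toMul.injective.eq_iff]
end

section
/- Let n ≥ c ≥ 3 be integers, let 𝔠 be the monomial ideal of ℚ[X_1, …, X_n] generated by all monomials X_1^{i_1}⋯X_n^{i_n} with i_1 + ⋯ + i_n = c and i_j ≥ 2 for some j, and let A = ℚ[X_1, …, X_n]/𝔠. For each i, let t_i be the ℚ-linear endomorphism of A given by multiplication by the class of X_i + 1. Then the t_i are pairwise commuting invertible endomorphisms satisfying (t_i − 1)^c = 0 for all i, (t_i − 1)(t_it_j − 1)^{c−1} = 0 for all i ≠ j, and (t_1^e·t_2^e⋯t_n^e − 1)^n ≠ 0 for every integer e ≥ 1. -/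
/-!
Multiplication by `X_i + 1` is the image of `X_i + 1` under `ℚ[X] → A → End_ℚ A`, whose kernel is
`𝔠` because `A` acts faithfully on itself, so each claim becomes a statement about membership
in `𝔠`. As `c ≥ 3`, every monomial of degree `c` in at most two variables lies in `𝔠`; this kills
`X_i ^ c` and every term of `X_i ((X_i + 1)(X_j + 1) - 1) ^ (c - 1)`.

For the last claim, `𝔠 ⊆ (X_1², …, X_n²)`, so the coefficient of `X_1⋯X_n` vanishes on `𝔠`.
On the other hand `∏ (X_i + 1) ^ e - 1 ≡ e ∑ X_i` modulo `(X_1, …, X_n)²`, so its `n`-th power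
agrees with `e ^ n (∑ X_i) ^ n` modulo `(X_1, …, X_n) ^ (n + 1)`, and its coefficient of
`X_1⋯X_n` is `n! e ^ n ≠ 0`.
-/

open MvPolynomial

/-- The monomial ideal of `ℚ[X_1,…,X_n]` generated by all monomials
`X_1^{i_1}⋯X_n^{i_n}` with `i_1+⋯+i_n = c` and `i_j ≥ 2` for some `j`. -/
noncomputable def cIdeal (n c : ℕ) : Ideal (MvPolynomial (Fin n) ℚ) :=
  Ideal.span {m | ∃ d : Fin n → ℕ, (∑ i, d i) = c ∧ (∃ j, 2 ≤ d j) ∧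
    m = ∏ i, X i ^ d i}

open Finset
open scoped Nat

namespace Ideal

variable {R : Type*} [CommRing R] {I : Ideal R}

theorem mul_add_one_mul_add_one_sub_one_pow_mem {a b : R} {c : ℕ} (hc : c ≠ 0)
    (h : ∀ k l, k + l = c → a ^ k * b ^ l ∈ I) : a * ((a + 1) * (b + 1) - 1) ^ (c - 1) ∈ I := by
  rw [show (a + 1) * (b + 1) - 1 = a * (b + 1) + b by ring, add_pow, mul_sum]
  refine I.sum_mem fun k hk => ?_
  have hk : k < c := by rw [mem_range] at hk; omega
  rw [show a * ((a * (b + 1)) ^ k * b ^ (c - 1 - k) * ((c - 1).choose k : R)) =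
      a ^ (k + 1) * b ^ (c - 1 - k) * ((b + 1) ^ k * ((c - 1).choose k : R)) by
    rw [mul_pow]; ring]
  exact mul_mem_right _ _ (h _ _ (by omega))

theorem mul_sub_one_sub_add_mem_sq {a b u v : R} (hu : u ∈ I) (hv : v ∈ I)
    (ha : a - 1 - u ∈ I ^ 2) (hb : b - 1 - v ∈ I ^ 2) : a * b - 1 - (u + v) ∈ I ^ 2 := by
  rw [show a * b - 1 - (u + v) = (a - 1 - u) * b + (1 + u) * (b - 1 - v) + u * v by ring]
  exact add_mem (add_mem (mul_mem_right _ _ ha) (mul_mem_left _ _ hb))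
    (pow_two I ▸ mul_mem_mul hu hv)

theorem pow_sub_pow_mem_pow_succ {a b : R} (hb : b ∈ I) (hab : a - b ∈ I ^ 2) (k : ℕ) :
    a ^ k - b ^ k ∈ I ^ (k + 1) := by
  have ha : a ∈ I := by
    simpa using add_mem hb (pow_le_self two_ne_zero hab)
  induction k with
  | zero => simp
  | succ k ih =>
    rw [show a ^ (k + 1) - b ^ (k + 1) = a * (a ^ k - b ^ k) + (a - b) * b ^ k by ring]
    refine add_mem (pow_succ' I (k + 1) ▸ mul_mem_mul ha ih) ?_
    have := mul_mem_mul hab (pow_mem_pow hb k)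
    rwa [← pow_add, add_comm] at this

end Ideal

namespace MvPolynomial

variable {σ R : Type*}

theorem sum_single_one_apply [DecidableEq σ] (S : Finset σ) (i : σ) :
    (∑ j ∈ S, Finsupp.single j 1) i = if i ∈ S then 1 else 0 := by
  simp [Finsupp.finsetSum_apply, Finsupp.single_apply]

theorem coeff_eq_zero_of_mem_span_X_sq [CommSemiring R] {s : σ →₀ ℕ}
    (hs : ∀ i, s i ≤ 1) {f : MvPolynomial σ R}
    (hf : f ∈ Ideal.span (Set.range fun j => (X j ^ 2 : MvPolynomial σ R))) : coeff s f = 0 := by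
  have hgen : (Set.range fun j => (X j ^ 2 : MvPolynomial σ R)) =
      (monomial · 1) '' Set.range fun j => Finsupp.single j 2 := by
    rw [← Set.range_comp]; simp [Function.comp_def, X_pow_eq_monomial]
  rw [hgen, mem_ideal_span_monomial_image] at hf
  by_contra h
  obtain ⟨_, ⟨j, rfl⟩, hle⟩ := hf s (mem_support_iff.mpr h)
  have := (hle j).trans (hs j)
  simp at this

theorem coeff_sum_single_sum_X_pow [Fintype σ] [CommSemiring R] (S : Finset σ) :
    coeff (∑ i ∈ S, Finsupp.single i 1) ((∑ i, X i : MvPolynomial σ R) ^ #S) = ((#S)! : R) := by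
  classical
  induction h : #S generalizing S with
  | zero => simp [card_eq_zero.mp h]
  | succ k ih =>
    have hstep : ∀ i ∈ S, coeff (∑ j ∈ S, Finsupp.single j 1)
        (X i * (∑ i, X i : MvPolynomial σ R) ^ k) = (k ! : R) := by
      intro i hi
      rw [coeff_X_mul', if_pos (by simp [sum_single_one_apply, hi]), ← add_sum_erase S _ hi,
        add_tsub_cancel_left, ih (S.erase i) (by rw [card_erase_of_mem hi, h]; rfl)]
    rw [pow_succ', sum_mul, coeff_sum, ← sum_subset (subset_univ S) fun i _ hi => by
      rw [coeff_X_mul', if_neg (by simp [sum_single_one_apply, hi])], sum_congr rfl hstep,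
      sum_const, h, Nat.factorial_succ]
    push_cast
    simp [nsmul_eq_mul]

theorem X_mem_idealOfVars [CommSemiring R] (i : σ) : (X i : MvPolynomial σ R) ∈ idealOfVars σ R :=
  Ideal.subset_span ⟨i, rfl⟩

theorem X_add_one_pow_sub_one_sub_mem_sq [CommRing R] (i : σ) (e : ℕ) :
    (X i + 1 : MvPolynomial σ R) ^ e - 1 - (e : MvPolynomial σ R) * X i ∈ idealOfVars σ R ^ 2 := by
  induction e with
  | zero => simp
  | succ e ih =>
    have := Ideal.mul_sub_one_sub_add_mem_sq (Ideal.mul_mem_left _ _ (X_mem_idealOfVars i))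
      (X_mem_idealOfVars i) ih (b := X i + 1) (by simp)
    rwa [← pow_succ, ← add_one_mul, ← Nat.cast_succ] at this

theorem prod_X_add_one_pow_sub_one_sub_mem_sq [CommRing R] (S : Finset σ) (e : ℕ) :
    ∏ i ∈ S, (X i + 1 : MvPolynomial σ R) ^ e - 1 - (e : MvPolynomial σ R) * ∑ i ∈ S, X i ∈
      idealOfVars σ R ^ 2 := by
  classical
  induction S using Finset.induction with
  | empty => simp
  | insert a S ha ih =>
    rw [prod_insert ha, sum_insert ha, mul_add]
    exact Ideal.mul_sub_one_sub_add_mem_sq (Ideal.mul_mem_left _ _ (X_mem_idealOfVars a))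
      (Ideal.mul_mem_left _ _ (Ideal.sum_mem _ fun i _ => X_mem_idealOfVars i))
      (X_add_one_pow_sub_one_sub_mem_sq a e) ih

theorem coeff_prod_X_add_one_pow_sub_one_pow [Fintype σ] [CommRing R] (e : ℕ) :
    coeff (∑ i, Finsupp.single i 1)
        ((∏ i, (X i + 1 : MvPolynomial σ R) ^ e - 1) ^ Fintype.card σ) =
      ((Fintype.card σ)! * e ^ Fintype.card σ : R) := by
  set ℓ : MvPolynomial σ R := (e : MvPolynomial σ R) * ∑ i, X i
  have hℓ : ℓ ∈ idealOfVars σ R :=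
    Ideal.mul_mem_left _ _ (Ideal.sum_mem _ fun i _ => X_mem_idealOfVars i)
  have hdiff := Ideal.pow_sub_pow_mem_pow_succ hℓ (prod_X_add_one_pow_sub_one_sub_mem_sq univ e)
    (Fintype.card σ)
  have hcoeff := (mem_pow_idealOfVars_iff' _ _).mp hdiff (∑ i, Finsupp.single i 1)
    (by simp [map_sum])
  have hsum := coeff_sum_single_sum_X_pow (R := R) (univ : Finset σ)
  rw [card_univ] at hsum
  rw [coeff_sub, sub_eq_zero] at hcoeff
  rw [hcoeff, mul_pow, ← map_natCast C, ← map_pow, coeff_C_mul, hsum, mul_comm]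

end MvPolynomial

theorem X_pow_mul_X_pow_mem_cIdeal {n c : ℕ} (hc : 3 ≤ c) (i j : Fin n) {a b : ℕ}
    (hab : a + b = c) : (X i ^ a * X j ^ b : MvPolynomial (Fin n) ℚ) ∈ cIdeal n c := by
  refine Ideal.subset_span ⟨Pi.single i a + Pi.single j b, ?_, ?_, ?_⟩
  · simp [sum_add_distrib, hab]
  · by_cases ha : 2 ≤ a
    · exact ⟨i, by simp only [Pi.add_apply, Pi.single_eq_same]; omega⟩
    · exact ⟨j, by simp only [Pi.add_apply, Pi.single_eq_same]; omega⟩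
  · simp only [Pi.add_apply, pow_add, prod_mul_distrib, Pi.single_apply, pow_ite, pow_zero,
      prod_ite_eq', mem_univ, if_true]

theorem cIdeal_le_span_X_sq (n c : ℕ) :
    cIdeal n c ≤ Ideal.span (Set.range fun j => (X j ^ 2 : MvPolynomial (Fin n) ℚ)) := by
  refine Ideal.span_le.mpr ?_
  rintro _ ⟨d, -, ⟨j, hj⟩, rfl⟩
  exact Ideal.mem_of_dvd _ ((pow_dvd_pow _ hj).trans (dvd_prod_of_mem _ (mem_univ j)))
    (Ideal.subset_span ⟨j, rfl⟩)

theorem prod_X_add_one_pow_sub_one_pow_notMem_cIdeal (n c : ℕ) {e : ℕ} (he : e ≠ 0) :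
    (∏ i, (X i + 1 : MvPolynomial (Fin n) ℚ) ^ e - 1) ^ n ∉ cIdeal n c := by
  intro h
  have := coeff_eq_zero_of_mem_span_X_sq (s := ∑ i, Finsupp.single i 1)
    (fun i => by simp [sum_single_one_apply])
    (cIdeal_le_span_X_sq n c h)
  have hcoeff := coeff_prod_X_add_one_pow_sub_one_pow (σ := Fin n) (R := ℚ) e
  rw [Fintype.card_fin] at hcoeff
  rw [hcoeff] at this
  simp [Nat.factorial_ne_zero, he] at this

set_option synthInstance.maxHeartbeats 1000000 in
theorem mul_by_X_add_one_endomorphisms_general (n c : ℕ) (hc : 3 ≤ c) :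
    ∀ t : Fin n → Module.End ℚ (MvPolynomial (Fin n) ℚ ⧸ cIdeal n c),
      (t = fun i => LinearMap.mulLeft ℚ (Ideal.Quotient.mk (cIdeal n c) (X i + 1))) →
      (∀ i j, Commute (t i) (t j)) ∧
      (∀ i, IsUnit (t i)) ∧
      (∀ i, (t i - 1) ^ c = 0) ∧
      (∀ i j, i ≠ j → (t i - 1) * (t i * t j - 1) ^ (c - 1) = 0) ∧
      (∀ e : ℕ, 1 ≤ e → ((List.ofFn fun i => t i ^ e).prod - 1) ^ n ≠ 0) := by
  rintro t rfl
  set ψ : MvPolynomial (Fin n) ℚ →ₐ[ℚ] Module.End ℚ (MvPolynomial (Fin n) ℚ ⧸ cIdeal n c) :=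
    (Algebra.lmul ℚ _).comp (Ideal.Quotient.mkₐ ℚ (cIdeal n c))
  have hψ : ∀ p, ψ p = 0 ↔ p ∈ cIdeal n c := fun p => by
    rw [AlgHom.comp_apply, map_eq_zero_iff _ Algebra.lmul_injective, Ideal.Quotient.mkₐ_eq_mk,
      Ideal.Quotient.eq_zero_iff_mem]
  have ht : ∀ i, LinearMap.mulLeft ℚ (Ideal.Quotient.mk (cIdeal n c) (X i + 1)) = ψ (X i + 1) :=
    fun i => rfl
  have hXc : ∀ i, ψ (X i) ^ c = 0 := fun i => by
    simpa [← map_pow, hψ] using X_pow_mul_X_pow_mem_cIdeal hc i i (add_zero c)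
  simp only [ht]
  refine ⟨fun i j => (Commute.all _ _).map ψ, fun i => ?_, fun i => ?_, fun i j _ => ?_,
    fun e he => ?_⟩
  · rw [map_add, map_one]
    exact IsNilpotent.isUnit_add_one ⟨c, hXc i⟩
  · rw [map_add, map_one, add_sub_cancel_right, hXc]
  · rw [← map_one ψ, ← map_mul, ← map_sub, ← map_sub, ← map_pow, ← map_mul, hψ,
      add_sub_cancel_right]
    exact Ideal.mul_add_one_mul_add_one_sub_one_pow_mem (by omega) fun k l =>
      X_pow_mul_X_pow_mem_cIdeal hc i j
  · have hofFn : (List.ofFn fun i => ψ (X i + 1) ^ e) =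
        (List.ofFn fun i => (X i + 1) ^ e).map ψ := by
      simp [List.map_ofFn, Function.comp_def]
    rw [hofFn, ← map_list_prod, List.prod_ofFn, ← map_one ψ, ← map_sub, ← map_pow, Ne, hψ]
    exact prod_X_add_one_pow_sub_one_pow_notMem_cIdeal n c (by omega)

set_option synthInstance.maxHeartbeats 1000000 in
theorem mul_by_X_add_one_endomorphisms (n c : ℕ) (hc : 3 ≤ c) (hn : c ≤ n) :
    ∀ t : Fin n → Module.End ℚ (MvPolynomial (Fin n) ℚ ⧸ cIdeal n c),
      (t = fun i => LinearMap.mulLeft ℚ (Ideal.Quotient.mk (cIdeal n c) (X i + 1))) →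
      (∀ i j, Commute (t i) (t j)) ∧
      (∀ i, IsUnit (t i)) ∧
      (∀ i, (t i - 1) ^ c = 0) ∧
      (∀ i j, i ≠ j → (t i - 1) * (t i * t j - 1) ^ (c - 1) = 0) ∧
      (∀ e : ℕ, 1 ≤ e → ((List.ofFn fun i => t i ^ e).prod - 1) ^ n ≠ 0) :=
  mul_by_X_add_one_endomorphisms_general n c hc
end

section
/- For every integer c ≥ 3, there exists a group G which is not finitely generated and is metabelian, such that: (i) for every prime p, G is a residually finite p-group, i.e. for every nontrivial g ∈ G there is a homomorphism from G onto a finite p-group whose kernel does not contain g; (ii) G is generated by a subset T which is normal (closed under conjugation by elements of G), commutator-closed (closed under taking commutators of its elements), and satisfies the Malcev law M_c(x,y); and (iii) G satisfies no positive law, i.e. for every pair of distinct elements α ≠ β of the free monoid on a countable set of variables, there exists a substitution of elements of G for the variables under which α and β take different values. -/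
open scoped commutatorElement

/-- A witness for the Main Theorem: a non-finitely-generated metabelian group `G`
(with an abelian normal subgroup containing all commutators) which is a residually
finite `p`-group for all primes `p`, is generated by a normal commutator-closed
subset `T` satisfying the Malcev law `M_c`, and satisfies no positive law. -/
structure MainCounterexample (c : ℕ) : Type 1 where
  G : Type
  [grp : Group G]
  /-- `G` is not finitely generated. -/
  not_fg : ¬ Group.FG G
  /-- `G` is metabelian: it has an abelian normal subgroup with abelian quotient
  (the quotient `G/A` is abelian iff every commutator lies in `A`). -/
  metabelian : ∃ A : Subgroup G, A.Normal ∧ (∀ x y : A, x * y = y * x) ∧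
    ∀ x y : G, ⁅x, y⁆ ∈ A
  /-- For every prime `p`, `G` is a residually finite `p`-group: every nontrivial
  `g` survives in a quotient by a normal subgroup which is a finite group of
  `p`-power order (equivalently, there is a homomorphism from `G` onto a finite
  `p`-group whose kernel does not contain `g`). -/
  residually_finite_p : ∀ p : ℕ, p.Prime → ∀ g : G, g ≠ 1 →
    ∃ N : Subgroup G, N.Normal ∧ g ∉ N ∧ ∃ k : ℕ, Nat.card (G ⧸ N) = p ^ k
  T : Set G
  /-- `T` generates `G`. -/
  T_gen : Subgroup.closure T = ⊤
  /-- `T` is a normal subset of `G`. -/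
  T_normal : ∀ x ∈ T, ∀ g : G, g * x * g⁻¹ ∈ T
  /-- `T` is commutator-closed. -/
  T_commutator_closed : ∀ x ∈ T, ∀ y ∈ T, ⁅x, y⁆ ∈ T
  /-- `T` satisfies the Malcev law `M_c(x,y)`. -/
  T_satisfies_Mc : ∀ x ∈ T, ∀ y ∈ T, malcevAlpha c x y = malcevBeta c x y
  /-- `G` satisfies no positive law: any two distinct positive words (elements of
  the free monoid on countably many variables) can be separated by a substitution
  of elements of `G`. -/
  no_positive_law : ∀ α β : FreeMonoid ℕ, α ≠ β →
    ∃ σ : ℕ → G, FreeMonoid.lift σ α ≠ FreeMonoid.lift σ β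

/-!
The group is `(Finset ℕ → ℤ) ⋊ (ℕ →₀ ℤ)`, where `v` acts on (a completion of)
`ℤ[x 0, x 1, …] / (x j ^ 2)` as multiplication by `∏ (1 + v j x j)`.

The elements acting through at most one variable generate the group and form a normal,
commutator-closed set. For two of them, `α_c - β_c` lies in the `c`-th power of the ideal of
two variables, which vanishes once `c ≥ 3`. Keeping finitely many variables and reducing
modulo `p ^ K` gives enough finite `p`-quotients. A positive law of length `L` fails under the
substitution in which every letter acts through the same `L` variables and also carries its own
marker variable: the coefficients of a word are then the power sums of the positions of each
letter, and these determine the word.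
-/

open Finset

noncomputable section

namespace MalcevCounterexample

variable {ι R : Type*} [DecidableEq ι] [CommRing R]

/-- A function `Finset ι → R` is read as the element `∑ S, b S • ∏ j ∈ S, x j` of the
(completed) ring `R[x j | j : ι] / (x j ^ 2)`, and `act v` is multiplication by the unit
`∏ j, (1 + v j • x j)`. -/
def act (v : ι →₀ R) : (Finset ι → R) →+ (Finset ι → R) :=
  AddMonoidHom.mk' (fun b S => ∑ T ∈ S.powerset, (∏ j ∈ S \ T, v j) * b T) fun b c => by
    funext S
    simp only [Pi.add_apply, mul_add, sum_add_distrib]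

theorem act_apply (v : ι →₀ R) (b : Finset ι → R) (S : Finset ι) :
    act v b S = ∑ T ∈ S.powerset, (∏ j ∈ S \ T, v j) * b T := rfl

theorem act_single (v : ι →₀ R) (T₀ : Finset ι) (r : R) (S : Finset ι) :
    act v (Pi.single T₀ r) S = if T₀ ⊆ S then (∏ j ∈ S \ T₀, v j) * r else 0 := by
  rw [act_apply]
  split_ifs with h
  · rw [sum_eq_single_of_mem T₀ (mem_powerset.2 h) fun T _ hT => by simp [hT]]
    simp
  · exact sum_eq_zero fun T hT => by
      rw [Pi.single_apply, if_neg (by rintro rfl; exact h (mem_powerset.1 hT)), mul_zero]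

theorem act_zero (b : Finset ι → R) : act 0 b = b := by
  funext S
  rw [act_apply, sum_eq_single_of_mem S (mem_powerset.2 subset_rfl) fun T hT hTS => ?_]
  · simp
  · obtain ⟨j, hj⟩ := sdiff_nonempty.2 fun h => hTS (subset_antisymm (mem_powerset.1 hT) h)
    rw [prod_eq_zero hj (Finsupp.zero_apply), zero_mul]

/-- `(1 + v x) * (1 + w x) = 1 + (v + w) x` because `x ^ 2 = 0`. -/
theorem act_act (v w : ι →₀ R) (b : Finset ι → R) : act v (act w b) = act (v + w) b := by
  funext S
  simp only [act_apply, Finsupp.coe_add, Pi.add_apply, prod_add, mul_sum, sum_mul]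
  rw [sum_sigma', sum_sigma']
  refine sum_nbij' (fun p => ⟨p.2, S \ p.1⟩) (fun q => ⟨S \ q.2, q.1⟩) ?_ ?_ ?_ ?_ ?_
  · rintro ⟨U, T⟩ hp
    simp only [mem_sigma, mem_powerset] at hp ⊢
    exact ⟨hp.2.trans hp.1, sdiff_subset_sdiff subset_rfl hp.2⟩
  · rintro ⟨T, A⟩ hq
    simp only [mem_sigma, mem_powerset, subset_sdiff] at hq ⊢
    exact ⟨sdiff_subset, hq.1, hq.2.2.symm⟩
  · rintro ⟨U, T⟩ hp
    simp only [mem_sigma, mem_powerset] at hp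
    simp [Finset.sdiff_sdiff_eq_self hp.1]
  · rintro ⟨T, A⟩ hq
    simp only [mem_sigma, mem_powerset] at hq
    simp [Finset.sdiff_sdiff_eq_self (hq.2.trans sdiff_subset)]
  · rintro ⟨U, T⟩ hp
    simp only [mem_sigma, mem_powerset] at hp
    have hsdiff : (S \ T) \ (S \ U) = U \ T := by
      ext x
      have := @hp.1 x
      simp only [mem_sdiff]
      tauto
    simp only [hsdiff]
    ring

@[ext]
structure SqfreeGroup (ι R : Type*) [DecidableEq ι] [CommRing R] where
  left : Finset ι → R
  right : ι →₀ R

namespace SqfreeGroup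

instance : One (SqfreeGroup ι R) := ⟨⟨0, 0⟩⟩
instance : Mul (SqfreeGroup ι R) :=
  ⟨fun x y => ⟨x.left + act x.right y.left, x.right + y.right⟩⟩
instance : Inv (SqfreeGroup ι R) := ⟨fun x => ⟨-act (-x.right) x.left, -x.right⟩⟩

variable (x y : SqfreeGroup ι R)

@[simp] theorem one_left : (1 : SqfreeGroup ι R).left = 0 := rfl
@[simp] theorem one_right : (1 : SqfreeGroup ι R).right = 0 := rfl
@[simp] theorem mul_left : (x * y).left = x.left + act x.right y.left := rfl
@[simp] theorem mul_right : (x * y).right = x.right + y.right := rfl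
@[simp] theorem inv_left : x⁻¹.left = -act (-x.right) x.left := rfl
@[simp] theorem inv_right : x⁻¹.right = -x.right := rfl

instance : Group (SqfreeGroup ι R) :=
  Group.ofLeftAxioms
    (fun x y z => SqfreeGroup.ext (by simp [act_act, add_assoc]) (add_assoc _ _ _))
    (fun x => SqfreeGroup.ext (by simp [act_zero]) (zero_add _))
    (fun x => SqfreeGroup.ext (by simp) (neg_add_cancel _))

def rightHom : SqfreeGroup ι R →* Multiplicative (ι →₀ R) where
  toFun x := .ofAdd x.right
  map_one' := rfl
  map_mul' _ _ := rfl

theorem rightHom_surjective : Function.Surjective (rightHom : SqfreeGroup ι R →* _) :=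
  fun v => ⟨⟨0, v.toAdd⟩, rfl⟩

theorem mul_comm_of_right_eq_zero {x y : SqfreeGroup ι R} (hx : x.right = 0) (hy : y.right = 0) :
    x * y = y * x :=
  SqfreeGroup.ext (by simp [hx, hy, act_zero, add_comm]) (add_comm _ _)

theorem right_conj (g x : SqfreeGroup ι R) : (g * x * g⁻¹).right = x.right := by
  simp only [mul_right, inv_right]
  abel

theorem right_commutatorElement (x y : SqfreeGroup ι R) : ⁅x, y⁆.right = 0 := by
  simp only [commutatorElement_def, mul_right, inv_right]
  abel

theorem exists_abelian_normal_commutator_mem :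
    ∃ A : Subgroup (SqfreeGroup ι R), A.Normal ∧ (∀ x y : A, x * y = y * x) ∧
      ∀ x y : SqfreeGroup ι R, ⁅x, y⁆ ∈ A := by
  have mem_ker {x : SqfreeGroup ι R} : x ∈ rightHom.ker ↔ x.right = 0 := MonoidHom.mem_ker
  exact ⟨rightHom.ker, rightHom.normal_ker,
    fun x y => Subtype.ext (mul_comm_of_right_eq_zero (mem_ker.1 x.2) (mem_ker.1 y.2)),
    fun x y => mem_ker.2 (right_commutatorElement x y)⟩

theorem not_fg [Infinite ι] : ¬ Group.FG (SqfreeGroup ι ℤ) := by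
  intro hfg
  have : AddGroup.FG (ι →₀ ℤ) :=
    AddGroup.fg_iff_mul_fg.2 (Group.fg_of_surjective rightHom_surjective)
  have : Module.Finite ℤ (ι →₀ ℤ) := Module.Finite.iff_addGroup_fg.2 this
  have := Module.Finite.finite_basis (Finsupp.basisSingleOne (R := ℤ) (ι := ι))
  exact not_finite ι

def oneVariable : Set (SqfreeGroup ι R) := {g | #g.right.support ≤ 1}

theorem closure_oneVariable : Subgroup.closure (oneVariable : Set (SqfreeGroup ι R)) = ⊤ := by
  have hright (v : ι →₀ R) :
      (⟨0, v⟩ : SqfreeGroup ι R) ∈ Subgroup.closure oneVariable := by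
    induction v using Finsupp.induction with
    | zero => exact one_mem _
    | single_add j r v _ _ ih =>
      have hsplit : (⟨0, Finsupp.single j r + v⟩ : SqfreeGroup ι R) =
          ⟨0, Finsupp.single j r⟩ * ⟨0, v⟩ := SqfreeGroup.ext (by simp) rfl
      rw [hsplit]
      refine mul_mem (Subgroup.subset_closure ?_) ih
      exact (card_le_card Finsupp.support_single_subset).trans (card_singleton j).le
  refine eq_top_iff.2 fun g _ => ?_
  have hsplit : g = ⟨g.left, 0⟩ * ⟨0, g.right⟩ :=
    SqfreeGroup.ext (by simp [act_zero]) (zero_add _).symm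
  rw [hsplit]
  exact mul_mem (Subgroup.subset_closure (by simp [oneVariable])) (hright g.right)

theorem conj_mem_oneVariable {x : SqfreeGroup ι R} (hx : x ∈ oneVariable)
    (g : SqfreeGroup ι R) : g * x * g⁻¹ ∈ oneVariable := by
  simpa [oneVariable, right_conj] using hx

theorem commutatorElement_mem_oneVariable (x y : SqfreeGroup ι R) :
    ⁅x, y⁆ ∈ oneVariable := by
  simp [oneVariable, right_commutatorElement]

end SqfreeGroup

section MalcevLaw

/-- `b` lies in the `k`-th power of the ideal generated by the `x j`, `j ∈ J`. -/
def MemIdealPow (J : Finset ι) (k : ℕ) (b : Finset ι → R) : Prop :=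
  ∀ S, b S ≠ 0 → k ≤ #(S ∩ J)

variable {J : Finset ι} {k : ℕ} {b c : Finset ι → R}

theorem memIdealPow_zero (J : Finset ι) (b : Finset ι → R) : MemIdealPow J 0 b :=
  fun _ _ => Nat.zero_le _

theorem MemIdealPow.sub (hb : MemIdealPow J k b) (hc : MemIdealPow J k c) :
    MemIdealPow J k (b - c) := fun S hS =>
  (ne_or_eq (b S) 0).elim (hb S) fun h => hc S fun h' => hS (by simp [h, h'])

theorem MemIdealPow.neg (hb : MemIdealPow J k b) : MemIdealPow J k (-b) :=
  fun S hS => hb S (by simpa using hS)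

theorem MemIdealPow.eq_zero (hb : MemIdealPow J k b) (hk : #J < k) : b = 0 :=
  funext fun S => by_contra fun hS => by
    have := card_le_card (inter_subset_right (s₁ := S) (s₂ := J))
    have := hb S hS
    omega

/-- `act u - 1` is multiplication by `∏ (1 + u j x j) - 1`, which lies in the ideal when `u` is
supported in `J`. -/
theorem MemIdealPow.act_sub_self {u : ι →₀ R} (hu : u.support ⊆ J) (hb : MemIdealPow J k b) :
    MemIdealPow J (k + 1) (act u b - b) := by
  intro S hS
  have hsplit : (act u b - b) S = ∑ T ∈ S.powerset.erase S, (∏ j ∈ S \ T, u j) * b T := by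
    rw [Pi.sub_apply, act_apply, ← add_sum_erase _ _ (mem_powerset_self S)]
    simp
  rw [hsplit] at hS
  obtain ⟨T, hT, hne⟩ := exists_ne_zero_of_sum_ne_zero hS
  obtain ⟨hTS, hTsub⟩ := mem_erase.1 hT
  replace hTsub := mem_powerset.1 hTsub
  have hdiff : S \ T ⊆ S ∩ J := fun j hj => mem_inter.2 ⟨(mem_sdiff.1 hj).1,
    hu (Finsupp.mem_support_iff.2 fun h0 => hne (by rw [prod_eq_zero hj h0, zero_mul]))⟩
  have hdisj : Disjoint (T ∩ J) (S \ T) :=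
    disjoint_left.2 fun j hj hj' => (mem_sdiff.1 hj').2 (mem_inter.1 hj).1
  have hcard : #(T ∩ J) + #(S \ T) ≤ #(S ∩ J) := by
    rw [← card_union_of_disjoint hdisj]
    exact card_le_card (union_subset (inter_subset_inter_right hTsub) hdiff)
  have hT : k ≤ #(T ∩ J) := hb T fun h => hne (by rw [h, mul_zero])
  have hST : 0 < #(S \ T) :=
    card_pos.2 (sdiff_nonempty.2 fun h => hTS (subset_antisymm hTsub h))
  omega

namespace SqfreeGroup

variable {x y : SqfreeGroup ι R}

theorem memIdealPow_one_mul_left_sub (hx : x.right.support ⊆ J) (hy : y.right.support ⊆ J) :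
    MemIdealPow J 1 ((x * y).left - (y * x).left) := by
  have h := ((memIdealPow_zero J y.left).act_sub_self hx).sub
    ((memIdealPow_zero J x.left).act_sub_self hy)
  convert h using 1
  simp only [mul_left]
  abel

theorem memIdealPow_succ_mul_left_sub (hxy : x.right = y.right) (hx : x.right.support ⊆ J)
    (h : MemIdealPow J k (x.left - y.left)) :
    MemIdealPow J (k + 1) ((x * y).left - (y * x).left) := by
  have h' := (h.act_sub_self hx).neg
  convert h' using 1
  simp only [mul_left, hxy, map_sub]
  abel

theorem malcevPair_right_eq_and_memIdealPow (hx : x.right.support ⊆ J)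
    (hy : y.right.support ⊆ J) {c : ℕ} (hc : 1 ≤ c) :
    (malcevPair c x y).1.right = (malcevPair c x y).2.right ∧
      (malcevPair c x y).1.right.support ⊆ J ∧
      MemIdealPow J c ((malcevPair c x y).1.left - (malcevPair c x y).2.left) := by
  induction c, hc using Nat.le_induction with
  | base =>
    exact ⟨add_comm _ _, Finsupp.support_add.trans (union_subset hx hy),
      memIdealPow_one_mul_left_sub hx hy⟩
  | succ c _ ih =>
    obtain ⟨hright, hsupp, hleft⟩ := ih
    refine ⟨add_comm _ _, Finsupp.support_add.trans (union_subset hsupp (hright ▸ hsupp)),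
      memIdealPow_succ_mul_left_sub hright hsupp hleft⟩

/-- `α_c` and `β_c` agree modulo the `c`-th power of the ideal of the variables in `J`, which
vanishes for `c > #J`. -/
theorem malcevAlpha_eq_malcevBeta (hx : x.right.support ⊆ J) (hy : y.right.support ⊆ J)
    {c : ℕ} (hc : #J < c) : malcevAlpha c x y = malcevBeta c x y := by
  obtain ⟨hright, -, hleft⟩ := malcevPair_right_eq_and_memIdealPow hx hy (c := c) (by omega)
  exact SqfreeGroup.ext (sub_eq_zero.1 (hleft.eq_zero hc)) hright

theorem malcevAlpha_eq_malcevBeta_of_mem_oneVariable {x y : SqfreeGroup ι R}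
    (hx : x ∈ oneVariable) (hy : y ∈ oneVariable) {c : ℕ} (hc : 3 ≤ c) :
    malcevAlpha c x y = malcevBeta c x y := by
  have := card_union_le x.right.support y.right.support
  exact malcevAlpha_eq_malcevBeta subset_union_left subset_union_right
    (by change #_ ≤ 1 at hx hy; omega)

end SqfreeGroup

end MalcevLaw

section ResiduallyFinite

theorem _root_.Finset.powerset_map {α β : Type*} (e : α ↪ β) (s : Finset α) :
    (s.map e).powerset = s.powerset.map (mapEmbedding e).toEmbedding := by
  ext T
  simp only [mem_powerset, mem_map, RelEmbedding.coe_toEmbedding, mapEmbedding_apply,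
    subset_map_iff]
  exact exists_congr fun U => and_congr_right fun _ => eq_comm

variable {κ R' : Type*} [DecidableEq κ] [CommRing R']

theorem map_act_map (e : κ ↪ ι) (f : R →+* R') (v : ι →₀ R) (b : Finset ι → R)
    (S : Finset κ) :
    f (act v b (S.map e)) =
      act ((v.comapDomain e e.injective.injOn).mapRange f f.map_zero)
        (fun T => f (b (T.map e))) S := by
  simp only [act_apply, powerset_map, sum_map, map_sum, map_mul, map_prod, ← Finset.map_sdiff,
    prod_map, RelEmbedding.coe_toEmbedding, mapEmbedding_apply, Finsupp.mapRange_apply,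
    Finsupp.comapDomain_apply]

namespace SqfreeGroup

def restrict (e : κ ↪ ι) (f : R →+* R') : SqfreeGroup ι R →* SqfreeGroup κ R' where
  toFun x := ⟨fun S => f (x.left (S.map e)),
    (x.right.comapDomain e e.injective.injOn).mapRange f f.map_zero⟩
  map_one' := SqfreeGroup.ext (funext fun _ => map_zero f) (by ext; simp)
  map_mul' x y := SqfreeGroup.ext (funext fun S => by simp [map_act_map]) (by ext; simp)

def equivProd : SqfreeGroup ι R ≃ (Finset ι → R) × (ι →₀ R) where
  toFun x := (x.left, x.right)
  invFun p := ⟨p.1, p.2⟩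

theorem card_eq [Finite ι] :
    Nat.card (SqfreeGroup ι R) = Nat.card R ^ (Nat.card (Finset ι) + Nat.card ι) := by
  rw [Nat.card_congr equivProd, Nat.card_prod, Nat.card_congr Finsupp.equivFunOnFinite,
    Nat.card_fun, Nat.card_fun, pow_add]

end SqfreeGroup

theorem intCast_zmod_pow_natAbs_ne_zero {p : ℕ} (hp : 1 < p) {z : ℤ} (hz : z ≠ 0) :
    (z : ZMod (p ^ z.natAbs)) ≠ 0 := by
  rw [Ne, ZMod.intCast_zmod_eq_zero_iff_dvd]
  refine fun h => hz (Int.eq_zero_of_dvd_of_natAbs_lt_natAbs h ?_)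
  simpa using Nat.lt_pow_self hp

theorem exists_card_quotient_ker_eq_pow {G H : Type*} [Group G] [Group H] (φ : G →* H)
    {p : ℕ} (hp : p.Prime) (hH : ∃ m : ℕ, Nat.card H = p ^ m) :
    ∃ k : ℕ, Nat.card (G ⧸ φ.ker) = p ^ k := by
  obtain ⟨m, hH⟩ := hH
  have hdvd : Nat.card (G ⧸ φ.ker) ∣ p ^ m := by
    rw [Nat.card_congr (QuotientGroup.quotientKerEquivRange φ).toEquiv, ← hH]
    exact Subgroup.card_subgroup_dvd_card φ.range
  obtain ⟨k, -, hk⟩ := (Nat.dvd_prime_pow hp).1 hdvd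
  exact ⟨k, hk⟩

namespace SqfreeGroup

theorem exists_restrict_ne_one {g : SqfreeGroup ι ℤ} (hg : g ≠ 1) {p : ℕ} (hp : 1 < p) :
    ∃ (F : Finset ι) (K : ℕ), restrict (Function.Embedding.subtype (· ∈ F))
      (Int.castRingHom (ZMod (p ^ K))) g ≠ 1 := by
  by_cases hleft : g.left = 0
  · have hright : g.right ≠ 0 := fun h => hg (SqfreeGroup.ext hleft h)
    obtain ⟨j, hj⟩ := Finsupp.ne_iff.1 hright
    refine ⟨{j}, (g.right j).natAbs, fun h => intCast_zmod_pow_natAbs_ne_zero hp hj ?_⟩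
    simpa [restrict] using DFunLike.congr_fun (congrArg right h) ⟨j, mem_singleton_self j⟩
  · obtain ⟨S, hS⟩ := Function.ne_iff.1 hleft
    refine ⟨S, (g.left S).natAbs, fun h => intCast_zmod_pow_natAbs_ne_zero hp hS ?_⟩
    simpa [restrict, attach_map_val] using congrFun (congrArg left h) S.attach

theorem residually_finite_pGroup {p : ℕ} (hp : p.Prime) {g : SqfreeGroup ι ℤ} (hg : g ≠ 1) :
    ∃ N : Subgroup (SqfreeGroup ι ℤ), N.Normal ∧ g ∉ N ∧
      ∃ k : ℕ, Nat.card (SqfreeGroup ι ℤ ⧸ N) = p ^ k := by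
  obtain ⟨F, K, hne⟩ := exists_restrict_ne_one hg hp.one_lt
  let φ := restrict (Function.Embedding.subtype (· ∈ F)) (Int.castRingHom (ZMod (p ^ K)))
  exact ⟨φ.ker, φ.normal_ker, hne,
    exists_card_quotient_ker_eq_pow φ hp ⟨_, by rw [card_eq, Nat.card_zmod, ← pow_mul]⟩⟩

end SqfreeGroup

end ResiduallyFinite

section PowerSums

open Polynomial

theorem _root_.Finset.eq_of_sum_pow_eq {F α : Type*} [Field F] [DecidableEq α] {f : α → F}
    (hf : Function.Injective f) {s t : Finset α} {n : ℕ} (hcard : #(s ∪ t) ≤ n + 1)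
    (h : ∀ e ≤ n, ∑ x ∈ s, f x ^ e = ∑ x ∈ t, f x ^ e) : s = t := by
  have hpoly (P : F[X]) (hP : P.natDegree ≤ n) :
      ∑ x ∈ s, P.eval (f x) = ∑ x ∈ t, P.eval (f x) := by
    simp only [eval_eq_sum_range' (Nat.lt_succ_of_le hP)]
    rw [sum_comm, sum_comm (s := t)]
    refine sum_congr rfl fun e he => ?_
    rw [← mul_sum, ← mul_sum, h e (Nat.lt_succ_iff.1 (mem_range.1 he))]
  have hbasis {y : α} (hy : y ∈ s ∪ t) {r : Finset α} (hr : r ⊆ s ∪ t) :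
      ∑ x ∈ r, (Lagrange.basis (s ∪ t) f y).eval (f x) = if y ∈ r then 1 else 0 := by
    rw [← sum_ite_eq' r y fun _ => (1 : F)]
    refine sum_congr rfl fun x hx => ?_
    split_ifs with hxy
    · rw [hxy, Lagrange.eval_basis_self hf.injOn hy]
    · exact Lagrange.eval_basis_of_ne (Ne.symm hxy) (hr hx)
  ext y
  by_cases hy : y ∈ s ∪ t
  · have := hpoly _ ((Lagrange.natDegree_basis hf.injOn hy).trans_le (by omega))
    rw [hbasis hy subset_union_left, hbasis hy subset_union_right] at this
    split_ifs at this <;> simp_all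
  · simp only [mem_union, not_or] at hy
    simp [hy]

end PowerSums

section PositiveLaws

def positions (w : List ℕ) (a : ℕ) : Finset ℕ :=
  (range w.length).filter fun k => w[k]? = some a

theorem mem_positions {w : List ℕ} {a k : ℕ} : k ∈ positions w a ↔ w[k]? = some a := by
  simp only [positions, mem_filter, mem_range, and_iff_right_iff_imp]
  intro h
  exact (List.getElem?_eq_some_iff.1 h).1

theorem card_positions_le (w : List ℕ) (a : ℕ) : #(positions w a) ≤ w.length :=
  (card_filter_le _ _).trans (card_range _).le

theorem sum_positions_cons {M : Type*} [AddCommMonoid M] (f : ℕ → M) (h : ℕ) (t : List ℕ)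
    (a : ℕ) :
    ∑ k ∈ positions (h :: t) a, f k =
      (if h = a then f 0 else 0) + ∑ k ∈ positions t a, f (k + 1) := by
  simp only [positions, sum_filter, List.length_cons, sum_range_succ', List.getElem?_cons_succ,
    List.getElem?_cons_zero, Option.some.injEq]
  rw [add_comm]

namespace SqfreeGroup

def onesBelow (L : ℕ) : ℕ →₀ ℤ := ∑ j ∈ range L, Finsupp.single j 1

theorem onesBelow_apply (L j : ℕ) : onesBelow L j = if j < L then 1 else 0 := by
  simp [onesBelow, Finsupp.finsetSum_apply, Finsupp.single_apply]

/-- The variable `L + a` marks the letter `a`; all letters act through the variables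
`0, …, L - 1`. -/
def letter (L a : ℕ) : SqfreeGroup ℕ ℤ := ⟨Pi.single {L + a} 1, onesBelow L⟩

variable {L e : ℕ}

theorem act_smul_onesBelow_single (he : e ≤ L) (χ : ℤ) (a b : ℕ) :
    act (χ • onesBelow L) (Pi.single {L + b} 1) (insert (L + a) (range e)) =
      if b = a then χ ^ e else 0 := by
  have hmarker (c : ℕ) : L + c ∉ range e := by simp only [mem_range]; omega
  rw [act_single]
  by_cases hba : b = a
  · subst hba
    rw [if_pos (singleton_subset_iff.2 (mem_insert_self _ _)), if_pos rfl, mul_one,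
      sdiff_singleton_eq_erase, erase_insert (hmarker b),
      prod_congr rfl (g := fun _ => χ) fun j hj => ?_, prod_const, card_range]
    rw [Finsupp.smul_apply, onesBelow_apply, if_pos (by rw [mem_range] at hj; omega),
      smul_eq_mul, mul_one]
  · rw [if_neg hba, if_neg]
    rw [singleton_subset_iff, mem_insert]
    rintro (h | h)
    · exact hba (by omega)
    · exact hmarker b h

theorem act_smul_onesBelow_prod_letter_left (he : e ≤ L) (a : ℕ) (w : List ℕ) (χ : ℤ) :
    act (χ • onesBelow L) (w.map (letter L)).prod.left (insert (L + a) (range e)) =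
      ∑ k ∈ positions w a, (χ + k) ^ e := by
  induction w generalizing χ with
  | nil => simp [positions]
  | cons h t ih =>
    have hshift : act (χ • onesBelow L) (act (onesBelow L) (t.map (letter L)).prod.left) =
        act ((χ + 1) • onesBelow L) (t.map (letter L)).prod.left := by
      rw [act_act, add_smul, one_smul]
    rw [List.map_cons, List.prod_cons, mul_left, map_add, Pi.add_apply, letter, hshift,
      act_smul_onesBelow_single he, ih, sum_positions_cons]
    push_cast
    simp only [add_zero, add_assoc, add_comm (1 : ℤ)]

theorem prod_letter_left (he : e ≤ L) (a : ℕ) (w : List ℕ) :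
    (w.map (letter L)).prod.left (insert (L + a) (range e)) =
      ∑ k ∈ positions w a, (k : ℤ) ^ e := by
  simpa [act_zero] using act_smul_onesBelow_prod_letter_left he a w 0

theorem no_positive_law {α β : FreeMonoid ℕ} (hne : α ≠ β) :
    ∃ σ : ℕ → SqfreeGroup ℕ ℤ, FreeMonoid.lift σ α ≠ FreeMonoid.lift σ β := by
  set L := α.toList.length + β.toList.length
  refine ⟨letter L, fun heq => hne (FreeMonoid.toList.injective ?_)⟩
  simp only [FreeMonoid.lift_apply] at heq
  refine List.ext_getElem? fun k => Option.ext fun a => ?_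
  simp only [← mem_positions]
  suffices positions α.toList a = positions β.toList a by rw [this]
  refine eq_of_sum_pow_eq (f := ((↑) : ℕ → ℚ)) (n := L) Nat.cast_injective ?_ fun e he => ?_
  · have := card_union_le (positions α.toList a) (positions β.toList a)
    have := card_positions_le α.toList a
    have := card_positions_le β.toList a
    omega
  · have := congrArg (fun x => (x.left (insert (L + a) (range e)) : ℚ)) heq
    simpa only [prod_letter_left he, Int.cast_sum, Int.cast_pow, Int.cast_natCast] using this

end SqfreeGroup

end PositiveLaws

end MalcevCounterexample

end

theorem exists_main_counterexample (c : ℕ) (hc : 3 ≤ c) :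
    Nonempty (MainCounterexample c) := by
  open MalcevCounterexample SqfreeGroup in
  exact ⟨{ G := SqfreeGroup ℕ ℤ
           not_fg := not_fg
           metabelian := exists_abelian_normal_commutator_mem
           residually_finite_p := fun _ hp _ hg => residually_finite_pGroup hp hg
           T := oneVariable
           T_gen := closure_oneVariable
           T_normal := fun _ hx g => conj_mem_oneVariable hx g
           T_commutator_closed := fun x _ y _ => commutatorElement_mem_oneVariable x y
           T_satisfies_Mc := fun _ hx _ hy =>
             malcevAlpha_eq_malcevBeta_of_mem_oneVariable hx hy hc
           no_positive_law := fun _ _ hne => no_positive_law hne }⟩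
end
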